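/- arXiv:2409.06032 — 6 statements merged into one kernel-verified Lean document; each statement's English description precedes it below -/
import Mathlib

section
/- Let (P₀, …, P_m) be a Clifford system of rank m+1 ≥ 2 on ℝ^{2l} with Cartan–Münzner polynomial F. Then for all i ≠ j, all t ∈ ℝ and all x ∈ ℝ^{2l}, F((cos t)·x + (sin t)·P_iP_j x) = F(x). In particular, each complex structure P_iP_j (i ≠ j) preserves F, so the FKM foliation defined by F is preserved by at least one complex structure. -/
open Matrix Real

/-- A Clifford system of rank `m` on `ℝ^n`. -/
def IsCliffordSystem {n : Type*} [Fintype n] [DecidableEq n] {m : ℕ}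
    (P : Fin m → Matrix n n ℝ) : Prop :=
  (∀ i, (P i)ᵀ = P i) ∧
  ∀ i j, P i * P j + P j * P i = (if i = j then (2 : ℝ) else 0) • (1 : Matrix n n ℝ)

/-- The Cartan–Münzner polynomial of a Clifford system:
`F(x) = ⟨x,x⟩² − 2 ∑ᵢ ⟨Pᵢx, x⟩²`. -/
def CMPoly {n : Type*} [Fintype n] [DecidableEq n] {m : ℕ}
    (P : Fin m → Matrix n n ℝ) (x : n → ℝ) : ℝ :=
  (x ⬝ᵥ x) ^ 2 - 2 * ∑ i, ((P i *ᵥ x) ⬝ᵥ x) ^ 2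

/-- Auxiliary quadratic form `x ↦ ⟨A x, x⟩`. -/
def cmQ {n : Type*} [Fintype n] (A : Matrix n n ℝ) (x : n → ℝ) : ℝ :=
  (A *ᵥ x) ⬝ᵥ x

lemma cmQ_mul {n : Type*} [Fintype n] (A B : Matrix n n ℝ) (x : n → ℝ) :
    (A *ᵥ x) ⬝ᵥ (B *ᵥ x) = cmQ (Bᵀ * A) x := by
  unfold cmQ
  rw [← Matrix.mulVec_mulVec, Matrix.mulVec_transpose, ← Matrix.dotProduct_mulVec]

lemma cmQ_neg {n : Type*} [Fintype n] (A : Matrix n n ℝ) (x : n → ℝ) :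
    cmQ (-A) x = - cmQ A x := by
  simp [cmQ, Matrix.neg_mulVec]

lemma cmQ_one {n : Type*} [Fintype n] [DecidableEq n] (x : n → ℝ) :
    cmQ (1 : Matrix n n ℝ) x = x ⬝ᵥ x := by
  simp [cmQ]

lemma cmQ_expand {n : Type*} [Fintype n] (A J : Matrix n n ℝ) (c s : ℝ) (x : n → ℝ) :
    (A *ᵥ (c • x + s • (J *ᵥ x))) ⬝ᵥ (c • x + s • (J *ᵥ x))
      = c ^ 2 * cmQ A x + c * s * (cmQ (Jᵀ * A) x + cmQ (A * J) x)
        + s ^ 2 * cmQ (Jᵀ * (A * J)) x := by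
  simp only [Matrix.mulVec_add, Matrix.mulVec_smul, dotProduct_add, add_dotProduct,
    dotProduct_smul, smul_dotProduct, smul_eq_mul, Matrix.mulVec_mulVec]
  rw [cmQ_mul A J, cmQ_mul (A * J) J]
  unfold cmQ
  ring

/-- The key invariance lemma. -/
lemma cliffordSystem_key {l m : ℕ}
    (P : Fin (m + 1) → Matrix (Fin (2 * l)) (Fin (2 * l)) ℝ)
    (hP : IsCliffordSystem P) (i j : Fin (m + 1)) (hij : i ≠ j) :
    ((P i * P j)ᵀ * (P i * P j) = 1) ∧ ((P i * P j) * (P i * P j) = -1) ∧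
    ∀ (t : ℝ) (x : Fin (2 * l) → ℝ),
      CMPoly P (cos t • x + sin t • ((P i * P j) *ᵥ x)) = CMPoly P x := by
  obtain ⟨hsym, hcomm⟩ := hP
  have hsq : ∀ k, P k * P k = 1 := by
    intro k
    have h := hcomm k k
    rw [if_pos rfl] at h
    have h2 : (2 : ℝ) • (P k * P k) = (2 : ℝ) • (1 : Matrix _ _ ℝ) := by
      rw [two_smul ℝ (P k * P k)]; exact h
    exact smul_right_injective _ (by norm_num) h2
  have hanti : ∀ a b, a ≠ b → P a * P b = -(P b * P a) := by
    intro a b hab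
    have h := hcomm a b
    rw [if_neg hab, zero_smul] at h
    exact eq_neg_of_add_eq_zero_left h
  set J := P i * P j with hJ
  have hJt : Jᵀ = P j * P i := by
    rw [hJ, Matrix.transpose_mul, hsym, hsym]
  have hJtneg : Jᵀ = -J := by
    rw [hJt, hanti j i hij.symm, hJ]
  have hJJ : J * J = -1 := by
    calc J * J = P i * (P j * P i) * P j := by rw [hJ]; noncomm_ring
      _ = P i * (-(P i * P j)) * P j := by rw [hanti j i hij.symm]
      _ = -((P i * P i) * (P j * P j)) := by noncomm_ring
      _ = -1 := by rw [hsq i, hsq j, mul_one]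
  have hJo : Jᵀ * J = 1 := by
    rw [hJtneg, Matrix.neg_mul, hJJ, neg_neg]
  refine ⟨hJo, hJJ, fun t x => ?_⟩
  set c := Real.cos t with hc
  set s := Real.sin t with hs
  have hpyth : c ^ 2 + s ^ 2 = 1 := by
    rw [hc, hs, add_comm]; exact Real.sin_sq_add_cos_sq t
  set y := c • x + s • (J *ᵥ x) with hy
  -- matrix identities
  have Mi1 : Jᵀ * P i = P j := by
    rw [hJt, mul_assoc, hsq i, mul_one]
  have Mi2 : P i * J = P j := by
    rw [hJ, ← mul_assoc, hsq i, one_mul]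
  have Mj2 : P j * J = -(P i) := by
    calc P j * J = (P j * P i) * P j := by rw [hJ]; noncomm_ring
      _ = (-(P i * P j)) * P j := by rw [hanti j i hij.symm]
      _ = -(P i * (P j * P j)) := by noncomm_ring
      _ = -(P i) := by rw [hsq j, mul_one]
  have Mj1 : Jᵀ * P j = -(P i) := by
    calc Jᵀ * P j = (P j * P i) * P j := by rw [hJt]
      _ = P j * J := by rw [hJ]; noncomm_ring
      _ = -(P i) := Mj2
  have Mi3 : Jᵀ * (P i * J) = -(P i) := by rw [Mi2, Mj1]
  have Mj3 : Jᵀ * (P j * J) = -(P j) := by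
    rw [Mj2, Matrix.mul_neg, Mi1]
  have Mk1 : ∀ k, k ≠ i → k ≠ j → Jᵀ * P k = -(P k * J) := by
    intro k hki hkj
    have h1 : P i * P k = -(P k * P i) := hanti i k (fun h => hki h.symm)
    have h2 : P j * P k = -(P k * P j) := hanti j k (fun h => hkj h.symm)
    rw [hJt, hJ]
    calc P j * P i * P k = P j * (P i * P k) := by rw [mul_assoc]
      _ = P j * (-(P k * P i)) := by rw [h1]
      _ = -((P j * P k) * P i) := by noncomm_ring
      _ = -((-(P k * P j)) * P i) := by rw [h2]
      _ = P k * (P j * P i) := by noncomm_ring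
      _ = P k * (-(P i * P j)) := by rw [hanti j i hij.symm]
      _ = -(P k * (P i * P j)) := by noncomm_ring
  have Mk2 : ∀ k, k ≠ i → k ≠ j → Jᵀ * (P k * J) = P k := by
    intro k hki hkj
    calc Jᵀ * (P k * J) = (Jᵀ * P k) * J := by rw [mul_assoc]
      _ = (-(P k * J)) * J := by rw [Mk1 k hki hkj]
      _ = -(P k * (J * J)) := by noncomm_ring
      _ = -(P k * (-1)) := by rw [hJJ]
      _ = P k := by noncomm_ring
  -- norm is preserved
  have hnorm : y ⬝ᵥ y = x ⬝ᵥ x := by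
    have h1 : y ⬝ᵥ y = ((1 : Matrix _ _ ℝ) *ᵥ y) ⬝ᵥ y := by rw [Matrix.one_mulVec]
    rw [h1, hy, cmQ_expand, Matrix.one_mul, Matrix.mul_one, hJo, hJtneg, cmQ_neg, cmQ_one]
    linear_combination (x ⬝ᵥ x) * hpyth
  -- the sum is preserved
  have hsum : ∑ k, ((P k *ᵥ y) ⬝ᵥ y) ^ 2 = ∑ k, ((P k *ᵥ x) ⬝ᵥ x) ^ 2 := by
    have hjmem : j ∈ Finset.univ.erase i := Finset.mem_erase.2 ⟨hij.symm, Finset.mem_univ j⟩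
    rw [← Finset.add_sum_erase _ _ (Finset.mem_univ i),
        ← Finset.add_sum_erase _ _ hjmem,
        ← Finset.add_sum_erase _ (fun k => ((P k *ᵥ x) ⬝ᵥ x) ^ 2) (Finset.mem_univ i),
        ← Finset.add_sum_erase _ (fun k => ((P k *ᵥ x) ⬝ᵥ x) ^ 2) hjmem]
    have hfi : ((P i *ᵥ y) ⬝ᵥ y) = c ^ 2 * cmQ (P i) x + c * s * (2 * cmQ (P j) x)
        - s ^ 2 * cmQ (P i) x := by
      rw [hy, cmQ_expand, Mi3, Mi1, Mi2, cmQ_neg]; ring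
    have hfj : ((P j *ᵥ y) ⬝ᵥ y) = c ^ 2 * cmQ (P j) x - c * s * (2 * cmQ (P i) x)
        - s ^ 2 * cmQ (P j) x := by
      rw [hy, cmQ_expand, Mj3, Mj1, Mj2, cmQ_neg, cmQ_neg]; ring
    have hrest : ∀ k ∈ (Finset.univ.erase i).erase j,
        ((P k *ᵥ y) ⬝ᵥ y) ^ 2 = ((P k *ᵥ x) ⬝ᵥ x) ^ 2 := by
      intro k hk
      have hkj : k ≠ j := (Finset.mem_erase.1 hk).1
      have hki : k ≠ i := (Finset.mem_erase.1 (Finset.mem_erase.1 hk).2).1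
      have : (P k *ᵥ y) ⬝ᵥ y = (P k *ᵥ x) ⬝ᵥ x := by
        rw [hy, cmQ_expand, Mk1 k hki hkj, Mk2 k hki hkj, cmQ_neg]
        have : c ^ 2 * cmQ (P k) x + c * s * (-cmQ (P k * J) x + cmQ (P k * J) x)
            + s ^ 2 * cmQ (P k) x = cmQ (P k) x := by
          linear_combination (cmQ (P k) x) * hpyth
        rw [this]; rfl
      rw [this]
    rw [Finset.sum_congr rfl hrest, hfi, hfj]
    have hqi : cmQ (P i) x = (P i *ᵥ x) ⬝ᵥ x := rfl
    have hqj : cmQ (P j) x = (P j *ᵥ x) ⬝ᵥ x := rfl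
    rw [hqi, hqj]
    set a := (P i *ᵥ x) ⬝ᵥ x
    set b := (P j *ᵥ x) ⬝ᵥ x
    have : (c ^ 2 * a + c * s * (2 * b) - s ^ 2 * a) ^ 2
        + (c ^ 2 * b - c * s * (2 * a) - s ^ 2 * b) ^ 2 = a ^ 2 + b ^ 2 := by
      linear_combination ((c ^ 2 + s ^ 2 + 1) * (a ^ 2 + b ^ 2)) * hpyth
    linarith [this]
  unfold CMPoly
  rw [hnorm, hsum]

/-- For a Clifford system of rank `m+1 ≥ 2` with Cartan–Münzner polynomial `F`,
for all `i ≠ j` one has `F((cos t)x + (sin t)P_iP_j x) = F(x)`; in particular each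
complex structure `P_iP_j` preserves `F`, so `F` is preserved by at least one
complex structure. -/
theorem cliffordSystem_complex_structure_preserves_CMPoly
    {l m : ℕ} (hl : 1 ≤ l) (hm : 1 ≤ m)
    (P : Fin (m + 1) → Matrix (Fin (2 * l)) (Fin (2 * l)) ℝ)
    (hP : IsCliffordSystem P) :
    (∀ i j : Fin (m + 1), i ≠ j → ∀ (t : ℝ) (x : Fin (2 * l) → ℝ),
        CMPoly P (cos t • x + sin t • ((P i * P j) *ᵥ x)) = CMPoly P x) ∧
    ∃ J : Matrix (Fin (2 * l)) (Fin (2 * l)) ℝ,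
      Jᵀ * J = 1 ∧ J * J = -1 ∧
      ∀ (t : ℝ) (x : Fin (2 * l) → ℝ),
        CMPoly P (cos t • x + sin t • (J *ᵥ x)) = CMPoly P x := by
  have h01 : (0 : Fin (m + 1)) ≠ 1 := by
    intro h
    have := congrArg Fin.val h
    simp [Fin.val_one', Nat.mod_eq_of_lt (by omega : 1 < m + 1)] at this
  refine ⟨fun i j hij => (cliffordSystem_key P hP i j hij).2.2, P 0 * P 1,
    (cliffordSystem_key P hP 0 1 h01).1, (cliffordSystem_key P hP 0 1 h01).2.1,
    (cliffordSystem_key P hP 0 1 h01).2.2⟩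
end

section
/- Let (P₀, …, P_m) be a Clifford system of rank m+1 ≥ 3 on ℝ^{2l} with Cartan–Münzner polynomial F. Then the quaternionic structure (P₀P₁, P₁P₂, P₀P₂) preserves F: for all x ∈ ℝ^{2l} and all (a₀, a₁, a₂, a₃) ∈ ℝ⁴ with a₀² + a₁² + a₂² + a₃² = 1, one has F((a₀·Id + a₁·P₀P₁ + a₂·P₁P₂ + a₃·P₀P₂)x) = F(x). -/
open Matrix

/-- For a Clifford system of rank `m+1 ≥ 3` with Cartan–Münzner polynomial `F`, the
quaternionic structure `(P₀P₁, P₁P₂, P₀P₂)` preserves `F`: for every `x` and every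
unit quadruple `(a₀,a₁,a₂,a₃)`,
`F((a₀·Id + a₁·P₀P₁ + a₂·P₁P₂ + a₃·P₀P₂)x) = F(x)`. -/
theorem cliffordSystem_quaternionic_structure_preserves_CMPoly
    {l m : ℕ} (hl : 1 ≤ l) (hm : 2 ≤ m)
    (P : Fin (m + 1) → Matrix (Fin (2 * l)) (Fin (2 * l)) ℝ)
    (hP : IsCliffordSystem P) :
    ∀ (x : Fin (2 * l) → ℝ) (a₀ a₁ a₂ a₃ : ℝ),
      a₀ ^ 2 + a₁ ^ 2 + a₂ ^ 2 + a₃ ^ 2 = 1 →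
      CMPoly P ((a₀ • (1 : Matrix (Fin (2 * l)) (Fin (2 * l)) ℝ)
          + a₁ • (P 0 * P 1) + a₂ • (P 1 * P 2) + a₃ • (P 0 * P 2)) *ᵥ x)
        = CMPoly P x := by
  obtain ⟨hsym, hrel⟩ := hP
  intro x a₀ a₁ a₂ a₃ ha
  -- distinctness of the indices 0, 1, 2 in `Fin (m+1)`
  have hv1 : ((1 : Fin (m+1)) : ℕ) = 1 := by
    have : ((1 : Fin (m+1)) : ℕ) = 1 % (m+1) := rfl
    rw [this, Nat.mod_eq_of_lt (by omega)]
  have hv2 : ((2 : Fin (m+1)) : ℕ) = 2 := by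
    have : ((2 : Fin (m+1)) : ℕ) = 2 % (m+1) := rfl
    rw [this, Nat.mod_eq_of_lt (by omega)]
  have h01 : (0 : Fin (m+1)) ≠ 1 := by
    intro h; rw [Fin.ext_iff, hv1] at h; simp at h
  have h02 : (0 : Fin (m+1)) ≠ 2 := by
    intro h; rw [Fin.ext_iff, hv2] at h; simp at h
  have h12 : (1 : Fin (m+1)) ≠ 2 := by
    intro h; rw [Fin.ext_iff, hv1, hv2] at h; omega
  -- squares and anticommutation
  have hsq : ∀ i, P i * P i = (1 : Matrix (Fin (2*l)) (Fin (2*l)) ℝ) := by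
    intro i
    have h := hrel i i
    rw [if_pos rfl] at h
    have h2 : (2:ℝ) • (P i * P i) = (2:ℝ) • (1 : Matrix (Fin (2*l)) (Fin (2*l)) ℝ) := by
      rw [two_smul]; exact h
    have h3 := congrArg (fun M : Matrix (Fin (2*l)) (Fin (2*l)) ℝ => (2:ℝ)⁻¹ • M) h2
    simp only [smul_smul] at h3
    norm_num at h3
    exact h3
  have hanti : ∀ i j, i ≠ j → P i * P j = -(P j * P i) := by
    intro i j hij
    have h := hrel i j
    rw [if_neg hij, zero_smul] at h
    exact eq_neg_of_add_eq_zero_left h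
  -- word-reduction lemmas
  have e00 : ∀ X : Matrix (Fin (2*l)) (Fin (2*l)) ℝ, P 0 * (P 0 * X) = X := fun X => by
    rw [← mul_assoc, hsq 0, one_mul]
  have e11 : ∀ X : Matrix (Fin (2*l)) (Fin (2*l)) ℝ, P 1 * (P 1 * X) = X := fun X => by
    rw [← mul_assoc, hsq 1, one_mul]
  have e22 : ∀ X : Matrix (Fin (2*l)) (Fin (2*l)) ℝ, P 2 * (P 2 * X) = X := fun X => by
    rw [← mul_assoc, hsq 2, one_mul]
  have g10 : P 1 * P 0 = -(P 0 * P 1) := hanti 1 0 (Ne.symm h01)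
  have g20 : P 2 * P 0 = -(P 0 * P 2) := hanti 2 0 (Ne.symm h02)
  have g21 : P 2 * P 1 = -(P 1 * P 2) := hanti 2 1 (Ne.symm h12)
  have e10 : ∀ X : Matrix (Fin (2*l)) (Fin (2*l)) ℝ,
      P 1 * (P 0 * X) = -(P 0 * (P 1 * X)) := fun X => by
    rw [← mul_assoc, g10, neg_mul, mul_assoc]
  have e20 : ∀ X : Matrix (Fin (2*l)) (Fin (2*l)) ℝ,
      P 2 * (P 0 * X) = -(P 0 * (P 2 * X)) := fun X => by
    rw [← mul_assoc, g20, neg_mul, mul_assoc]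
  have e21 : ∀ X : Matrix (Fin (2*l)) (Fin (2*l)) ℝ,
      P 2 * (P 1 * X) = -(P 1 * (P 2 * X)) := fun X => by
    rw [← mul_assoc, g21, neg_mul, mul_assoc]
  -- the quaternionic matrix and its transpose
  set A := a₀ • (1 : Matrix (Fin (2 * l)) (Fin (2 * l)) ℝ)
      + a₁ • (P 0 * P 1) + a₂ • (P 1 * P 2) + a₃ • (P 0 * P 2) with hA
  have hAT : Aᵀ = a₀ • (1 : Matrix (Fin (2 * l)) (Fin (2 * l)) ℝ)
      - a₁ • (P 0 * P 1) - a₂ • (P 1 * P 2) - a₃ • (P 0 * P 2) := by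
    have t1 : (P 0 * P 1)ᵀ = -(P 0 * P 1) := by
      rw [transpose_mul, hsym 0, hsym 1, g10]
    have t2 : (P 1 * P 2)ᵀ = -(P 1 * P 2) := by
      rw [transpose_mul, hsym 1, hsym 2, g21]
    have t3 : (P 0 * P 2)ᵀ = -(P 0 * P 2) := by
      rw [transpose_mul, hsym 0, hsym 2, g20]
    rw [hA]
    simp only [transpose_add, transpose_smul, transpose_one, t1, t2, t3, smul_neg]
    abel
  have hAAt : Aᵀ * A = 1 := by
    have h : Aᵀ * A = (a₀^2 + a₁^2 + a₂^2 + a₃^2) • (1 : Matrix (Fin (2*l)) (Fin (2*l)) ℝ) := by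
      rw [hAT, hA]
      simp only [add_mul, sub_mul, mul_add, mul_sub, smul_mul_assoc, mul_smul_comm,
        mul_assoc, one_mul, mul_one, smul_smul, e00, e11, e22, e10, e20, e21,
        hsq 0, hsq 1, hsq 2, g10, g20, g21, mul_neg, neg_mul, smul_neg, neg_neg]
      module
    rw [h, ha, one_smul]
  -- conjugation identities
  have conj0 : Aᵀ * (P 0 * A) = (a₀^2 - a₁^2 + a₂^2 - a₃^2) • P 0
      + (2*(a₀*a₁) - 2*(a₂*a₃)) • P 1 + (2*(a₀*a₃) + 2*(a₁*a₂)) • P 2 := by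
    rw [hAT, hA]
    simp only [add_mul, sub_mul, mul_add, mul_sub, smul_mul_assoc, mul_smul_comm,
      mul_assoc, one_mul, mul_one, smul_smul, e00, e11, e22, e10, e20, e21,
      hsq 0, hsq 1, hsq 2, g10, g20, g21, mul_neg, neg_mul, smul_neg, neg_neg]
    module
  have conj1 : Aᵀ * (P 1 * A) = (-(2*(a₀*a₁)) - 2*(a₂*a₃)) • P 0
      + (a₀^2 - a₁^2 - a₂^2 + a₃^2) • P 1 + (2*(a₀*a₂) - 2*(a₁*a₃)) • P 2 := by
    rw [hAT, hA]
    simp only [add_mul, sub_mul, mul_add, mul_sub, smul_mul_assoc, mul_smul_comm,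
      mul_assoc, one_mul, mul_one, smul_smul, e00, e11, e22, e10, e20, e21,
      hsq 0, hsq 1, hsq 2, g10, g20, g21, mul_neg, neg_mul, smul_neg, neg_neg]
    module
  have conj2 : Aᵀ * (P 2 * A) = (-(2*(a₀*a₃)) + 2*(a₁*a₂)) • P 0
      + (-(2*(a₀*a₂)) - 2*(a₁*a₃)) • P 1 + (a₀^2 + a₁^2 - a₂^2 - a₃^2) • P 2 := by
    rw [hAT, hA]
    simp only [add_mul, sub_mul, mul_add, mul_sub, smul_mul_assoc, mul_smul_comm,
      mul_assoc, one_mul, mul_one, smul_smul, e00, e11, e22, e10, e20, e21,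
      hsq 0, hsq 1, hsq 2, g10, g20, g21, mul_neg, neg_mul, smul_neg, neg_neg]
    module
  -- conjugation fixes the other P i
  have hcommA : ∀ i : Fin (m+1), i ≠ 0 → i ≠ 1 → i ≠ 2 → Aᵀ * (P i * A) = P i := by
    intro i hi0 hi1 hi2
    have c1 : (P 0 * P 1) * P i = P i * (P 0 * P 1) := by
      rw [mul_assoc, hanti 1 i (Ne.symm hi1)]
      rw [mul_neg, ← mul_assoc, hanti 0 i (Ne.symm hi0)]
      rw [neg_mul, neg_neg, mul_assoc]
    have c2 : (P 1 * P 2) * P i = P i * (P 1 * P 2) := by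
      rw [mul_assoc, hanti 2 i (Ne.symm hi2)]
      rw [mul_neg, ← mul_assoc, hanti 1 i (Ne.symm hi1)]
      rw [neg_mul, neg_neg, mul_assoc]
    have c3 : (P 0 * P 2) * P i = P i * (P 0 * P 2) := by
      rw [mul_assoc, hanti 2 i (Ne.symm hi2)]
      rw [mul_neg, ← mul_assoc, hanti 0 i (Ne.symm hi0)]
      rw [neg_mul, neg_neg, mul_assoc]
    have hPA : P i * A = A * P i := by
      rw [hA]
      simp only [add_mul, mul_add, smul_mul_assoc, mul_smul_comm, one_mul, mul_one,
        c1, c2, c3]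
    rw [hPA, ← mul_assoc, hAAt, one_mul]
  -- transporting dot products through A
  have keydot : ∀ M : Matrix (Fin (2*l)) (Fin (2*l)) ℝ,
      (M *ᵥ (A *ᵥ x)) ⬝ᵥ (A *ᵥ x) = ((Aᵀ * (M * A)) *ᵥ x) ⬝ᵥ x := by
    intro M
    rw [mulVec_mulVec, dotProduct_mulVec, ← mulVec_transpose, mulVec_mulVec]
  have hnorm : (A *ᵥ x) ⬝ᵥ (A *ᵥ x) = x ⬝ᵥ x := by
    have h := keydot 1
    rw [one_mulVec, one_mul, hAAt, one_mulVec] at h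
    exact h
  -- the three rotated coefficients
  set c0 := (P 0 *ᵥ x) ⬝ᵥ x with hc0def
  set c1 := (P 1 *ᵥ x) ⬝ᵥ x with hc1def
  set c2 := (P 2 *ᵥ x) ⬝ᵥ x with hc2def
  have hd0 : (P 0 *ᵥ (A *ᵥ x)) ⬝ᵥ (A *ᵥ x)
      = (a₀^2 - a₁^2 + a₂^2 - a₃^2) * c0 + (2*(a₀*a₁) - 2*(a₂*a₃)) * c1
        + (2*(a₀*a₃) + 2*(a₁*a₂)) * c2 := by
    rw [keydot, conj0]
    simp [add_mulVec, smul_mulVec, add_dotProduct, smul_dotProduct, smul_eq_mul,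
      hc0def, hc1def, hc2def]
  have hd1 : (P 1 *ᵥ (A *ᵥ x)) ⬝ᵥ (A *ᵥ x)
      = (-(2*(a₀*a₁)) - 2*(a₂*a₃)) * c0 + (a₀^2 - a₁^2 - a₂^2 + a₃^2) * c1
        + (2*(a₀*a₂) - 2*(a₁*a₃)) * c2 := by
    rw [keydot, conj1]
    simp [add_mulVec, smul_mulVec, add_dotProduct, smul_dotProduct, smul_eq_mul,
      hc0def, hc1def, hc2def]
  have hd2 : (P 2 *ᵥ (A *ᵥ x)) ⬝ᵥ (A *ᵥ x)
      = (-(2*(a₀*a₃)) + 2*(a₁*a₂)) * c0 + (-(2*(a₀*a₂)) - 2*(a₁*a₃)) * c1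
        + (a₀^2 + a₁^2 - a₂^2 - a₃^2) * c2 := by
    rw [keydot, conj2]
    simp [add_mulVec, smul_mulVec, add_dotProduct, smul_dotProduct, smul_eq_mul,
      hc0def, hc1def, hc2def]
  -- splitting the sum
  have hsub : ∀ (h : Fin (m+1) → ℝ), ∑ i, h i
      = (h 0 + h 1 + h 2) + ∑ i ∈ Finset.univ \ ({0,1,2} : Finset (Fin (m+1))), h i := by
    intro h
    rw [← Finset.sum_sdiff (Finset.subset_univ ({0,1,2} : Finset (Fin (m+1))))]
    rw [show ({0,1,2} : Finset (Fin (m+1))) = insert 0 (insert 1 {2}) from rfl,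
      Finset.sum_insert (by simp [h01, h02]), Finset.sum_insert (by simp [h12]),
      Finset.sum_singleton]
    ring
  have hsum : ∑ i, ((P i *ᵥ (A *ᵥ x)) ⬝ᵥ (A *ᵥ x))^2 = ∑ i, ((P i *ᵥ x) ⬝ᵥ x)^2 := by
    rw [hsub (fun i => ((P i *ᵥ (A *ᵥ x)) ⬝ᵥ (A *ᵥ x))^2),
      hsub (fun i => ((P i *ᵥ x) ⬝ᵥ x)^2)]
    have htail : ∀ i ∈ Finset.univ \ ({0,1,2} : Finset (Fin (m+1))),
        ((P i *ᵥ (A *ᵥ x)) ⬝ᵥ (A *ᵥ x))^2 = ((P i *ᵥ x) ⬝ᵥ x)^2 := by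
      intro i hi
      simp only [Finset.mem_sdiff, Finset.mem_insert, Finset.mem_singleton] at hi
      push_neg at hi
      obtain ⟨-, hi0, hi1, hi2⟩ := hi
      rw [keydot, hcommA i hi0 hi1 hi2]
    rw [Finset.sum_congr rfl htail]
    simp only [hd0, hd1, hd2, ← hc0def, ← hc1def, ← hc2def]
    have : ((a₀^2 - a₁^2 + a₂^2 - a₃^2) * c0 + (2*(a₀*a₁) - 2*(a₂*a₃)) * c1
          + (2*(a₀*a₃) + 2*(a₁*a₂)) * c2)^2
        + ((-(2*(a₀*a₁)) - 2*(a₂*a₃)) * c0 + (a₀^2 - a₁^2 - a₂^2 + a₃^2) * c1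
          + (2*(a₀*a₂) - 2*(a₁*a₃)) * c2)^2
        + ((-(2*(a₀*a₃)) + 2*(a₁*a₂)) * c0 + (-(2*(a₀*a₂)) - 2*(a₁*a₃)) * c1
          + (a₀^2 + a₁^2 - a₂^2 - a₃^2) * c2)^2
        = c0^2 + c1^2 + c2^2 := by
      linear_combination ((a₀^2 + a₁^2 + a₂^2 + a₃^2 + 1) * (c0^2 + c1^2 + c2^2)) * ha
    linarith [this]
  simp only [CMPoly]
  rw [hnorm, hsum]
end

section
/- Let (P₀, …, P_m) be a Clifford system of rank m+1 ≥ 2 on ℝ^{2l} with Cartan–Münzner polynomial F. Then F satisfies the second Cartan–Münzner equation: its Laplacian ΔF(x) = ∑_{k=1}^{2l} ∂²F/∂x_k²(x) equals 8·(m₂ − m₁)·‖x‖² for all x ∈ ℝ^{2l}, where m₁ = m and m₂ = l − m − 1. -/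
open Matrix RealInnerProductSpace

/-- The Cartan–Münzner polynomial of a Clifford system, on Euclidean space. -/
noncomputable def CMPolyE {n : Type*} [Fintype n] [DecidableEq n] {m : ℕ}
    (P : Fin m → Matrix n n ℝ) (x : EuclideanSpace ℝ n) : ℝ :=
  ⟪x, x⟫ ^ 2 - 2 * ∑ i, ⟪Matrix.toEuclideanLin (P i) x, x⟫ ^ 2

/-- The Laplacian of `F : ℝ^N → ℝ`: the sum of its pure second partial derivatives
in the standard coordinates. -/
noncomputable def laplacian {N : ℕ} (F : EuclideanSpace ℝ (Fin N) → ℝ)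
    (x : EuclideanSpace ℝ (Fin N)) : ℝ :=
  ∑ k : Fin N, fderiv ℝ (fun y => fderiv ℝ F y (EuclideanSpace.single k 1)) x
    (EuclideanSpace.single k 1)

/-!
For a symmetric `B` with quadratic form `q x = ⟪B x, x⟫` one has `∇q = 2 B x` and `Δq = 2 tr B`, so
`Δ(q²) = 2 ‖∇q‖² + 2 q Δq = 8 ‖B x‖² + 4 (tr B) q`. For `B = 1` on `ℝ^{2l}` this is
`(8 + 8 l) ‖x‖²`. For `B = Pᵢ` it is `8 ‖x‖²`: `Pᵢ² = 1` makes `Pᵢ` an isometry, and anticommuting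
with some other `Pⱼ` (rank at least two) makes it traceless. Hence
`ΔF = (8 + 8 l - 16 (m + 1)) ‖x‖²`.
-/

theorem ContDiff.differentiable_fderiv_apply {E F : Type*} [NormedAddCommGroup E]
    [NormedSpace ℝ E] [NormedAddCommGroup F] [NormedSpace ℝ F] {f : E → F}
    (hf : ContDiff ℝ 2 f) (v : E) : Differentiable ℝ (fun y => fderiv ℝ f y v) :=
  ((hf.fderiv_right (by norm_num)).differentiable one_ne_zero).clm_apply (differentiable_const v)

section Laplacian

variable {N : ℕ} {f g : EuclideanSpace ℝ (Fin N) → ℝ}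

theorem laplacian_fun_sub (hf : ContDiff ℝ 2 f) (hg : ContDiff ℝ 2 g)
    (x : EuclideanSpace ℝ (Fin N)) :
    laplacian (fun y => f y - g y) x = laplacian f x - laplacian g x := by
  simp only [laplacian, ← Finset.sum_sub_distrib]
  refine Finset.sum_congr rfl fun k _ => ?_
  have hfg : (fun y => fderiv ℝ (fun y => f y - g y) y (EuclideanSpace.single k 1))
      = fun y => fderiv ℝ f y (EuclideanSpace.single k 1)
          - fderiv ℝ g y (EuclideanSpace.single k 1) := by
    funext y
    rw [fderiv_fun_sub (hf.differentiable two_ne_zero y) (hg.differentiable two_ne_zero y)]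
    rfl
  rw [hfg, fderiv_fun_sub (hf.differentiable_fderiv_apply _ x)
    (hg.differentiable_fderiv_apply _ x)]
  rfl

theorem laplacian_const_mul (c : ℝ) (hf : ContDiff ℝ 2 f) (x : EuclideanSpace ℝ (Fin N)) :
    laplacian (fun y => c * f y) x = c * laplacian f x := by
  simp only [laplacian, Finset.mul_sum]
  refine Finset.sum_congr rfl fun k _ => ?_
  have hcf : (fun y => fderiv ℝ (fun y => c * f y) y (EuclideanSpace.single k 1))
      = fun y => c * fderiv ℝ f y (EuclideanSpace.single k 1) := by
    funext y
    rw [fderiv_const_mul (hf.differentiable two_ne_zero y)]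
    rfl
  rw [hcf, fderiv_const_mul (hf.differentiable_fderiv_apply _ x)]
  rfl

theorem laplacian_fun_sum {ι : Type*} (s : Finset ι) {f : ι → EuclideanSpace ℝ (Fin N) → ℝ}
    (hf : ∀ i ∈ s, ContDiff ℝ 2 (f i)) (x : EuclideanSpace ℝ (Fin N)) :
    laplacian (fun y => ∑ i ∈ s, f i y) x = ∑ i ∈ s, laplacian (f i) x := by
  simp only [laplacian]
  rw [Finset.sum_comm]
  refine Finset.sum_congr rfl fun k _ => ?_
  have hsum : (fun y => fderiv ℝ (fun y => ∑ i ∈ s, f i y) y (EuclideanSpace.single k 1))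
      = fun y => ∑ i ∈ s, fderiv ℝ (f i) y (EuclideanSpace.single k 1) := by
    funext y
    rw [fderiv_fun_sum fun i hi => (hf i hi).differentiable two_ne_zero y]
    simp only [_root_.sum_apply]
  rw [hsum, fderiv_fun_sum fun i hi => (hf i hi).differentiable_fderiv_apply _ x]
  simp only [_root_.sum_apply]

end Laplacian

section QuadraticForm

variable {E : Type*} [NormedAddCommGroup E] [InnerProductSpace ℝ E] {B : E →L[ℝ] E}

theorem contDiff_inner_apply_self_sq : ContDiff ℝ 2 (fun y => ⟪B y, y⟫ ^ 2) :=
  (B.contDiff.inner ℝ contDiff_id).pow 2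

theorem fderiv_inner_apply_self (hB : (B : E →ₗ[ℝ] E).IsSymmetric) (x v : E) :
    fderiv ℝ (fun y => ⟪B y, y⟫) x v = 2 * ⟪B x, v⟫ := by
  rw [fderiv_inner_apply ℝ B.differentiableAt differentiableAt_fun_id, B.fderiv, fderiv_fun_id,
    ContinuousLinearMap.id_apply, two_mul]
  exact congrArg (_ + ·) ((hB v x).trans (real_inner_comm _ _))

theorem fderiv_inner_apply_self_sq (hB : (B : E →ₗ[ℝ] E).IsSymmetric) (x v : E) :
    fderiv ℝ (fun y => ⟪B y, y⟫ ^ 2) x v = 4 * ⟪B x, x⟫ * ⟪B x, v⟫ := by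
  rw [fderiv_fun_pow 2 (B.differentiableAt.inner ℝ differentiableAt_fun_id), _root_.smul_apply,
    fderiv_inner_apply_self hB]
  simp only [Nat.add_one_sub_one, pow_one, nsmul_eq_mul, Nat.cast_ofNat, smul_eq_mul]
  ring

theorem fderiv_fderiv_inner_apply_self_sq (hB : (B : E →ₗ[ℝ] E).IsSymmetric) (x v : E) :
    fderiv ℝ (fun y => fderiv ℝ (fun y => ⟪B y, y⟫ ^ 2) y v) x v
      = 8 * ⟪B x, v⟫ ^ 2 + 4 * ⟪B x, x⟫ * ⟪B v, v⟫ := by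
  have hq : DifferentiableAt ℝ (fun y => ⟪B y, y⟫) x :=
    B.differentiableAt.inner ℝ differentiableAt_fun_id
  have hl : DifferentiableAt ℝ (fun y => ⟪B y, v⟫) x :=
    B.differentiableAt.inner ℝ (differentiableAt_const v)
  simp_rw [fderiv_inner_apply_self_sq hB]
  rw [fderiv_fun_mul (hq.const_mul 4) hl, fderiv_const_mul hq]
  simp only [_root_.add_apply, _root_.smul_apply, fderiv_inner_apply_self hB, smul_eq_mul]
  rw [fderiv_inner_apply ℝ B.differentiableAt (differentiableAt_const v), B.fderiv]
  simp only [fderiv_fun_const, Pi.zero_apply, _root_.zero_apply, inner_zero_right, zero_add]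
  ring

end QuadraticForm

section MatrixQuadraticForm

variable {n : Type*} [Fintype n] [DecidableEq n]

theorem Matrix.IsHermitian.isSymmetric_toEuclideanCLM {A : Matrix n n ℝ} (hA : A.IsHermitian) :
    (toEuclideanCLM (𝕜 := ℝ) A : EuclideanSpace ℝ n →ₗ[ℝ] EuclideanSpace ℝ n).IsSymmetric :=
  isSymmetric_toEuclideanLin_iff.2 hA

theorem trace_eq_sum_inner_toEuclideanCLM_single (A : Matrix n n ℝ) :
    A.trace = ∑ k, ⟪toEuclideanCLM (𝕜 := ℝ) A (EuclideanSpace.single k 1),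
      EuclideanSpace.single k 1⟫ := by
  simp [EuclideanSpace.inner_single_right, Matrix.trace]

theorem laplacian_inner_toEuclideanCLM_self_sq {N : ℕ} {A : Matrix (Fin N) (Fin N) ℝ}
    (hA : A.IsHermitian) (x : EuclideanSpace ℝ (Fin N)) :
    laplacian (fun y => ⟪toEuclideanCLM (𝕜 := ℝ) A y, y⟫ ^ 2) x
      = 8 * ‖toEuclideanCLM (𝕜 := ℝ) A x‖ ^ 2
        + 4 * A.trace * ⟪toEuclideanCLM (𝕜 := ℝ) A x, x⟫ := by
  have hparseval :=
    (EuclideanSpace.basisFun (Fin N) ℝ).sum_sq_inner_left (toEuclideanCLM (𝕜 := ℝ) A x)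
  simp only [EuclideanSpace.basisFun_apply] at hparseval
  simp only [laplacian, fderiv_fderiv_inner_apply_self_sq hA.isSymmetric_toEuclideanCLM,
    Finset.sum_add_distrib, ← Finset.mul_sum, hparseval,
    ← trace_eq_sum_inner_toEuclideanCLM_single]
  ring

end MatrixQuadraticForm

namespace IsCliffordSystem

variable {n : Type*} [Fintype n] [DecidableEq n] {m : ℕ} {P : Fin m → Matrix n n ℝ}

theorem isHermitian (hP : IsCliffordSystem P) (i : Fin m) : (P i).IsHermitian := by
  rw [IsHermitian, conjTranspose_eq_transpose_of_trivial, hP.1 i]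

theorem mul_self (hP : IsCliffordSystem P) (i : Fin m) : P i * P i = 1 := by
  have h := hP.2 i i
  rw [if_pos rfl, ← two_smul ℝ] at h
  exact smul_right_injective _ two_ne_zero h

theorem mul_eq_neg_mul_of_ne (hP : IsCliffordSystem P) {i j : Fin m} (hij : i ≠ j) :
    P j * P i = -(P i * P j) :=
  eq_neg_of_add_eq_zero_right (by simpa [hij] using hP.2 i j)

theorem trace_eq_zero (hP : IsCliffordSystem P) {i j : Fin m} (hij : i ≠ j) :
    (P i).trace = 0 := by
  have h : (P i).trace = -(P i).trace :=
    calc (P i).trace = (P j * (P j * P i)).trace := by rw [← mul_assoc, hP.mul_self, one_mul]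
      _ = (P j * P i * P j).trace := trace_mul_comm _ _
      _ = -(P i).trace := by
        rw [hP.mul_eq_neg_mul_of_ne hij, neg_mul, trace_neg, mul_assoc, hP.mul_self, mul_one]
  linarith

theorem norm_toEuclideanCLM (hP : IsCliffordSystem P) (i : Fin m) (x : EuclideanSpace ℝ n) :
    ‖toEuclideanCLM (𝕜 := ℝ) (P i) x‖ = ‖x‖ := by
  have hsq : toEuclideanCLM (𝕜 := ℝ) (P i) (toEuclideanCLM (𝕜 := ℝ) (P i) x) = x := by
    rw [← mul_apply_eq_comp, ← map_mul, hP.mul_self, map_one, one_apply_eq_self]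
  rw [← sq_eq_sq₀ (norm_nonneg _) (norm_nonneg _), ← real_inner_self_eq_norm_sq,
    ← real_inner_self_eq_norm_sq]
  exact ((hP.isHermitian i).isSymmetric_toEuclideanCLM _ _).trans (congrArg _ hsq)

end IsCliffordSystem

theorem CMPoly_second_CartanMunzner_equation_general
    {l m : ℕ} (hm : 1 ≤ m)
    (P : Fin (m + 1) → Matrix (Fin (2 * l)) (Fin (2 * l)) ℝ)
    (hP : IsCliffordSystem P) :
    ∀ x : EuclideanSpace ℝ (Fin (2 * l)),
      laplacian (CMPolyE P) x
        = 8 * (((l : ℝ) - (m : ℝ) - 1) - (m : ℝ)) * ‖x‖ ^ 2 := by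
  intro x
  -- `toEuclideanCLM A` makes the quadratic forms visibly smooth; it coerces to
  -- `toEuclideanLin A` definitionally.
  have hF : CMPolyE P = fun y => ⟪toEuclideanCLM (𝕜 := ℝ) 1 y, y⟫ ^ 2
      - 2 * ∑ i, ⟪toEuclideanCLM (𝕜 := ℝ) (P i) y, y⟫ ^ 2 := by
    funext y
    simp only [CMPolyE, map_one, one_apply_eq_self]
    rfl
  have htrace (i : Fin (m + 1)) : (P i).trace = 0 := by
    have : Nontrivial (Fin (m + 1)) := Fin.nontrivial_iff_two_le.2 (by omega)
    obtain ⟨j, hj⟩ := exists_ne i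
    exact hP.trace_eq_zero hj.symm
  have hsum := ContDiff.sum fun i (_ : i ∈ Finset.univ) =>
    contDiff_inner_apply_self_sq (B := toEuclideanCLM (𝕜 := ℝ) (P i))
  rw [hF, laplacian_fun_sub contDiff_inner_apply_self_sq (contDiff_const.mul hsum),
    laplacian_const_mul _ hsum, laplacian_fun_sum _ fun i _ => contDiff_inner_apply_self_sq]
  simp only [laplacian_inner_toEuclideanCLM_self_sq isHermitian_one,
    laplacian_inner_toEuclideanCLM_self_sq (hP.isHermitian _), htrace, hP.norm_toEuclideanCLM]
  simp only [map_one, one_apply_eq_self, trace_one, Fintype.card_fin, real_inner_self_eq_norm_sq,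
    mul_zero, zero_mul, add_zero, Finset.sum_const, Finset.card_univ, nsmul_eq_mul]
  push_cast
  ring

/-- The Cartan–Münzner polynomial `F` of a Clifford system of rank `m+1 ≥ 2` on `ℝ^{2l}`
satisfies the second Cartan–Münzner equation: `ΔF(x) = 8(m₂ − m₁)‖x‖²`, where
`m₁ = m` and `m₂ = l − m − 1`. -/
theorem CMPoly_second_CartanMunzner_equation
    {l m : ℕ} (hl : 1 ≤ l) (hm : 1 ≤ m)
    (P : Fin (m + 1) → Matrix (Fin (2 * l)) (Fin (2 * l)) ℝ)
    (hP : IsCliffordSystem P) :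
    ∀ x : EuclideanSpace ℝ (Fin (2 * l)),
      laplacian (CMPolyE P) x
        = 8 * (((l : ℝ) - (m : ℝ) - 1) - (m : ℝ)) * ‖x‖ ^ 2 :=
  CMPoly_second_CartanMunzner_equation_general hm P hP
end

section
/- Let (P₀, …, P_m) be a Clifford system on ℝ^{2l}. Then the linear map φ from the space of skew-symmetric (m+1)×(m+1) real matrices to the space of (2l)×(2l) real matrices defined by φ(A) = (1/4)·∑_{i,j=0}^{m} A_{ij}·P_iP_j is injective, takes values in skew-symmetric matrices, and is a Lie algebra homomorphism: φ(AB − BA) = φ(A)φ(B) − φ(B)φ(A) for all skew-symmetric A, B. (This realizes the Lie algebra 𝔰𝔬(m+1) of the group Spin(m+1) ⊂ Aut(F) as the subalgebra span{P_iP_j : i < j} of 𝔰𝔬(2l).) -/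
open Matrix

private lemma cs_sum4comm {α β M : Type*} [Fintype α] [Fintype β] [AddCommMonoid M]
    (f : α → α → β → β → M) :
    ∑ k : β, ∑ l : β, ∑ i : α, ∑ j : α, f i j k l
      = ∑ i : α, ∑ j : α, ∑ k : β, ∑ l : β, f i j k l := by
  calc ∑ k : β, ∑ l : β, ∑ i : α, ∑ j : α, f i j k l
      = ∑ k : β, ∑ i : α, ∑ l : β, ∑ j : α, f i j k l :=
        Finset.sum_congr rfl fun k _ => Finset.sum_comm
    _ = ∑ i : α, ∑ k : β, ∑ l : β, ∑ j : α, f i j k l := Finset.sum_comm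
    _ = ∑ i : α, ∑ k : β, ∑ j : α, ∑ l : β, f i j k l :=
        Finset.sum_congr rfl fun i _ => Finset.sum_congr rfl fun k _ => Finset.sum_comm
    _ = ∑ i : α, ∑ j : α, ∑ k : β, ∑ l : β, f i j k l :=
        Finset.sum_congr rfl fun i _ => Finset.sum_comm

private lemma cs_expandS {N ι : Type*} [Fintype N] [DecidableEq N] [Fintype ι]
    (P : ι → Matrix N N ℝ) (A B : Matrix ι ι ℝ) :
    (∑ i, ∑ j, A i j • (P i * P j)) * (∑ i, ∑ j, B i j • (P i * P j))
      = ∑ i, ∑ j, ∑ k, ∑ l, (A i j * B k l) • (P i * P j * (P k * P l)) := by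
  simp only [Finset.sum_mul, Finset.mul_sum, smul_mul_assoc, mul_smul_comm, smul_smul,
    Finset.smul_sum]
  rw [cs_sum4comm (f := fun i j k l => (B k l * A i j) • (P i * P j * (P k * P l)))]
  exact Finset.sum_congr rfl fun i _ => Finset.sum_congr rfl fun j _ =>
    Finset.sum_congr rfl fun k _ => Finset.sum_congr rfl fun l _ => by rw [mul_comm]

private lemma cs_key3 {N ι : Type*} [Fintype N] [DecidableEq N] [Fintype ι] [DecidableEq ι]
    (P : ι → Matrix N N ℝ)
    (rel : ∀ a b, P a * P b = (if a = b then (2:ℝ) else 0) • (1 : Matrix N N ℝ) - P b * P a)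
    (A B : Matrix ι ι ℝ) :
    (∑ i, ∑ j, A i j • (P i * P j)) * (∑ i, ∑ j, B i j • (P i * P j))
      - (∑ i, ∑ j, B i j • (P i * P j)) * (∑ i, ∑ j, A i j • (P i * P j))
      = ∑ i, ∑ j, ∑ k, ∑ l, (A i j * B k l) •
          ((if j = k then (2:ℝ) else 0) • (P i * P l)
           - (if j = l then (2:ℝ) else 0) • (P i * P k)
           + (if i = k then (2:ℝ) else 0) • (P l * P j)
           - (if i = l then (2:ℝ) else 0) • (P k * P j)) := by
  have hba : (∑ i, ∑ j, B i j • (P i * P j)) * (∑ i, ∑ j, A i j • (P i * P j))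
      = ∑ i, ∑ j, ∑ k, ∑ l, (A i j * B k l) • (P k * P l * (P i * P j)) := by
    rw [cs_expandS, ← cs_sum4comm (f := fun i j k l => (A i j * B k l) • (P k * P l * (P i * P j)))]
    exact Finset.sum_congr rfl fun i _ => Finset.sum_congr rfl fun j _ =>
      Finset.sum_congr rfl fun k _ => Finset.sum_congr rfl fun l _ => by rw [mul_comm]
  rw [cs_expandS, hba]
  simp only [← Finset.sum_sub_distrib, ← smul_sub]
  refine Finset.sum_congr rfl fun i _ => Finset.sum_congr rfl fun j _ =>
    Finset.sum_congr rfl fun k _ => Finset.sum_congr rfl fun l _ => ?_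
  congr 1
  have h1 : P i * P j * (P k * P l)
      = (if j = k then (2:ℝ) else 0) • (P i * P l) - P i * P k * (P j * P l) := by
    rw [show P i * P j * (P k * P l) = P i * (P j * P k) * P l by noncomm_ring, rel j k]
    simp only [sub_mul, mul_sub, smul_mul_assoc, mul_smul_comm, mul_one, one_mul]
    noncomm_ring
  have h2 : P i * P k * (P j * P l)
      = (if j = l then (2:ℝ) else 0) • (P i * P k) - P i * P k * (P l * P j) := by
    rw [rel j l]
    simp only [mul_sub, mul_smul_comm, mul_one]
  have h3 : P i * P k * (P l * P j)
      = (if i = k then (2:ℝ) else 0) • (P l * P j) - P k * P i * (P l * P j) := by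
    rw [show P i * P k * (P l * P j) = (P i * P k) * (P l * P j) from rfl, rel i k]
    simp only [sub_mul, smul_mul_assoc, one_mul]
  have h4 : P k * P i * (P l * P j)
      = (if i = l then (2:ℝ) else 0) • (P k * P j) - P k * P l * (P i * P j) := by
    rw [show P k * P i * (P l * P j) = P k * (P i * P l) * P j by noncomm_ring, rel i l]
    simp only [sub_mul, mul_sub, smul_mul_assoc, mul_smul_comm, mul_one, one_mul]
    noncomm_ring
  rw [h1, h2, h3, h4]
  abel

private lemma cs_key4 {N ι : Type*} [Fintype N] [Fintype ι] [DecidableEq ι]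
    (P : ι → Matrix N N ℝ) (A B : Matrix ι ι ℝ)
    (hB : ∀ a b, B b a = -B a b) :
    ∑ i, ∑ j, ∑ k, ∑ l, (A i j * B k l) •
          ((if j = k then (2:ℝ) else 0) • (P i * P l)
           - (if j = l then (2:ℝ) else 0) • (P i * P k)
           + (if i = k then (2:ℝ) else 0) • (P l * P j)
           - (if i = l then (2:ℝ) else 0) • (P k * P j))
      = (4:ℝ) • ∑ i, ∑ j, ((A * B) i j - (B * A) i j) • (P i * P j) := by
  have s1 : ∀ u v, ∑ k, A u k * B k v * 2 = 2 * (A * B) u v := by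
    intro u v
    rw [Matrix.mul_apply, Finset.mul_sum]
    exact Finset.sum_congr rfl fun k _ => by ring
  have s2 : ∀ u v, ∑ k, A u k * B v k * 2 = -(2 * (A * B) u v) := by
    intro u v
    calc ∑ k, A u k * B v k * 2 = ∑ k, -(A u k * B k v * 2) :=
          Finset.sum_congr rfl fun k _ => by rw [hB k v]; ring
      _ = -(2 * (A * B) u v) := by rw [Finset.sum_neg_distrib, s1]
  have s3 : ∀ u v, ∑ k, A k v * B k u * 2 = -(2 * (B * A) u v) := by
    intro u v
    calc ∑ k, A k v * B k u * 2 = ∑ k, -(B u k * A k v * 2) :=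
          Finset.sum_congr rfl fun k _ => by rw [hB k u]; ring
      _ = -(2 * (B * A) u v) := by
          rw [Finset.sum_neg_distrib, Matrix.mul_apply, Finset.mul_sum]
          congr 1
          exact Finset.sum_congr rfl fun k _ => by ring
  have s4 : ∀ u v, ∑ k, A k v * B u k * 2 = 2 * (B * A) u v := by
    intro u v
    rw [Matrix.mul_apply, Finset.mul_sum]
    exact Finset.sum_congr rfl fun k _ => by ring
  simp only [smul_sub, smul_add, smul_smul, mul_ite, mul_zero, ite_smul, zero_smul,
    smul_ite, smul_zero, Finset.sum_ite_irrel, Finset.sum_const_zero,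
    Finset.sum_sub_distrib, Finset.sum_add_distrib, Finset.sum_ite_eq, Finset.sum_ite_eq',
    Finset.mem_univ, if_true]
  have E1 : ∑ u : ι, ∑ k : ι, ∑ v : ι, (A u k * B k v * 2) • (P u * P v)
      = ∑ u : ι, ∑ v : ι, (2 * (A * B) u v) • (P u * P v) :=
    Finset.sum_congr rfl fun u _ => Finset.sum_comm.trans <|
      Finset.sum_congr rfl fun v _ => by rw [← Finset.sum_smul, s1]
  have E2 : ∑ u : ι, ∑ k : ι, ∑ v : ι, (A u k * B v k * 2) • (P u * P v)
      = ∑ u : ι, ∑ v : ι, (-(2 * (A * B) u v)) • (P u * P v) :=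
    Finset.sum_congr rfl fun u _ => Finset.sum_comm.trans <|
      Finset.sum_congr rfl fun v _ => by rw [← Finset.sum_smul, s2]
  have E3 : ∑ k : ι, ∑ v : ι, ∑ u : ι, (A k v * B k u * 2) • (P u * P v)
      = ∑ u : ι, ∑ v : ι, (-(2 * (B * A) u v)) • (P u * P v) := by
    have step : ∑ v : ι, ∑ u : ι, ∑ k : ι, (A k v * B k u * 2) • (P u * P v)
        = ∑ u : ι, ∑ v : ι, (-(2 * (B * A) u v)) • (P u * P v) := by
      rw [Finset.sum_comm]
      exact Finset.sum_congr rfl fun u _ => Finset.sum_congr rfl fun v _ => by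
        rw [← Finset.sum_smul, s3]
    rw [← step, Finset.sum_comm]
    exact Finset.sum_congr rfl fun v _ => Finset.sum_comm
  have E4 : ∑ k : ι, ∑ v : ι, ∑ u : ι, (A k v * B u k * 2) • (P u * P v)
      = ∑ u : ι, ∑ v : ι, (2 * (B * A) u v) • (P u * P v) := by
    have step : ∑ v : ι, ∑ u : ι, ∑ k : ι, (A k v * B u k * 2) • (P u * P v)
        = ∑ u : ι, ∑ v : ι, (2 * (B * A) u v) • (P u * P v) := by
      rw [Finset.sum_comm]
      exact Finset.sum_congr rfl fun u _ => Finset.sum_congr rfl fun v _ => by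
        rw [← Finset.sum_smul, s4]
    rw [← step, Finset.sum_comm]
    exact Finset.sum_congr rfl fun v _ => Finset.sum_comm
  rw [E1, E2, E3, E4, Finset.smul_sum]
  simp only [Finset.smul_sum, ← Finset.sum_sub_distrib, ← Finset.sum_add_distrib]
  refine Finset.sum_congr rfl fun u _ => Finset.sum_congr rfl fun v _ => ?_
  rw [smul_smul, ← sub_smul, ← add_smul, ← sub_smul]
  congr 1
  ring

private lemma cs_tr4 {l : ℕ} {ι : Type*} [DecidableEq ι]
    (P : ι → Matrix (Fin (2*l)) (Fin (2*l)) ℝ)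
    (hsq : ∀ i, P i * P i = 1)
    (hanti : ∀ i j, i ≠ j → P j * P i = -(P i * P j))
    (tr2 : ∀ i j, trace (P i * P j) = if i = j then (2*l : ℝ) else 0)
    (i j k l' : ι) :
    trace (P i * P j * (P k * P l'))
      = (2*l : ℝ) * ((if i = j then (1:ℝ) else 0) * (if k = l' then (1:ℝ) else 0)
        - (if i = k then (1:ℝ) else 0) * (if j = l' then (1:ℝ) else 0)
        + (if i = l' then (1:ℝ) else 0) * (if j = k then (1:ℝ) else 0)) := by
  have hsq' : ∀ a (M : Matrix (Fin (2*l)) (Fin (2*l)) ℝ), P a * (P a * M) = M := by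
    intro a M; rw [← mul_assoc, hsq, one_mul]
  by_cases hij : i = j
  · subst hij
    rw [mul_assoc, hsq' i, tr2]
    split_ifs <;> simp_all
  by_cases hkl : k = l'
  · subst hkl
    rw [hsq k, mul_one, tr2, if_neg hij]
    simp [hij]
  by_cases hjk : j = k
  · subst hjk
    rw [mul_assoc, hsq' j, tr2]
    split_ifs <;> simp_all
  by_cases hik : i = k
  · subst hik
    rw [mul_assoc, ← mul_assoc (P j), hanti i j hij, neg_mul, mul_assoc, mul_neg, hsq',
      trace_neg, tr2]
    split_ifs <;> simp_all
  by_cases hjl : j = l'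
  · subst hjl
    rw [mul_assoc, hanti j k hjk, mul_neg, hsq' j, mul_neg, trace_neg, tr2, if_neg hik]
    simp [hij, hik, Ne.symm hij]
  by_cases hil : i = l'
  · subst hil
    rw [trace_mul_comm, mul_assoc, mul_assoc, hsq' i, tr2,
      if_neg (show ¬ k = j from fun h => hjk h.symm)]
    simp_all
  · have e1 : P k * (P l' * P i) = P i * (P k * P l') := by
      rw [hanti i l' hil, mul_neg, ← mul_assoc, hanti i k hik, neg_mul, neg_neg, mul_assoc]
    have e2 : P j * (P k * (P l' * P i)) = -(P i * (P j * (P k * P l'))) := by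
      rw [e1, ← mul_assoc, hanti i j hij, neg_mul, mul_assoc]
    have e3 : trace (P i * P j * (P k * P l')) = -trace (P i * P j * (P k * P l')) := by
      nth_rewrite 1 [mul_assoc, trace_mul_comm, mul_assoc, mul_assoc, e2, trace_neg, mul_assoc]
      rfl
    have : trace (P i * P j * (P k * P l')) = 0 := by linarith
    rw [this]
    simp [hij, hkl, hjk, hik, hjl, hil]

/-- For a Clifford system `(P₀, …, P_m)` on `ℝ^{2l}`, the linear map
`φ(A) = (1/4)·∑_{i,j} A_{ij} P_i P_j`, restricted to skew-symmetric `(m+1)×(m+1)`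
matrices, is injective, takes values in skew-symmetric matrices, and is a Lie algebra
homomorphism; this realizes `𝔰𝔬(m+1)` as the subalgebra `span{P_iP_j : i < j}` of
`𝔰𝔬(2l)`. -/
theorem cliffordSystem_so_embedding
    {l m : ℕ} (hl : 1 ≤ l)
    (P : Fin (m + 1) → Matrix (Fin (2 * l)) (Fin (2 * l)) ℝ)
    (hP : IsCliffordSystem P)
    (φ : Matrix (Fin (m + 1)) (Fin (m + 1)) ℝ → Matrix (Fin (2 * l)) (Fin (2 * l)) ℝ)
    (hφ : ∀ A, φ A = (1 / 4 : ℝ) • ∑ i, ∑ j, A i j • (P i * P j)) :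
    (∀ A, Aᵀ = -A → (φ A)ᵀ = -(φ A)) ∧
    (∀ A B, Aᵀ = -A → Bᵀ = -B → φ A = φ B → A = B) ∧
    (∀ A B, Aᵀ = -A → Bᵀ = -B →
      φ (A * B - B * A) = φ A * φ B - φ B * φ A) := by
  obtain ⟨hsym, hrel⟩ := hP
  have hsq : ∀ i, P i * P i = 1 := by
    intro i
    have h := hrel i i
    rw [if_pos rfl] at h
    have h2 : (2:ℝ) • (P i * P i) = (2:ℝ) • (1 : Matrix (Fin (2*l)) (Fin (2*l)) ℝ) := by
      nth_rewrite 1 [two_smul]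
      exact h
    exact smul_right_injective _ (by norm_num : (2:ℝ) ≠ 0) h2
  have hanti : ∀ i j, i ≠ j → P j * P i = -(P i * P j) := by
    intro i j hij
    have h := hrel i j
    rw [if_neg hij, zero_smul] at h
    rw [eq_neg_iff_add_eq_zero, add_comm]
    exact h
  have rel : ∀ a b, P a * P b
      = (if a = b then (2:ℝ) else 0) • (1 : Matrix (Fin (2*l)) (Fin (2*l)) ℝ) - P b * P a :=
    fun a b => eq_sub_of_add_eq (hrel a b)
  have skew_entry : ∀ (X : Matrix (Fin (m+1)) (Fin (m+1)) ℝ), Xᵀ = -X →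
      ∀ a b, X b a = -X a b := by
    intro X hX a b
    have := congrFun (congrFun hX a) b
    simpa [Matrix.transpose_apply, Matrix.neg_apply] using this
  have tr2 : ∀ i j, trace (P i * P j) = if i = j then (2*l : ℝ) else 0 := by
    intro i j
    have h := congrArg Matrix.trace (hrel i j)
    rw [trace_add, trace_smul, trace_one, trace_mul_comm (P j) (P i)] at h
    have hc : (Fintype.card (Fin (2*l)) : ℝ) = 2*l := by simp
    rw [hc] at h
    split_ifs with hij <;> simp [hij] at h ⊢ <;> linarith
  have key2 : ∀ (A : Matrix (Fin (m+1)) (Fin (m+1)) ℝ), Aᵀ = -A →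
      ∀ k l', trace (φ A * (P k * P l')) = -(l:ℝ) * A k l' := by
    intro A hA k l'
    have hA' := skew_entry A hA
    have hdiag : ∀ i, A i i = 0 := fun i => by have := hA' i i; linarith
    rw [hφ, smul_mul_assoc, trace_smul]
    simp only [Finset.sum_mul, smul_mul_assoc, trace_sum, trace_smul]
    simp only [cs_tr4 P hsq hanti tr2, smul_eq_mul]
    simp only [mul_sub, mul_add, mul_ite, ite_mul, mul_zero, zero_mul, mul_one, one_mul,
      Finset.sum_sub_distrib, Finset.sum_add_distrib, Finset.sum_ite_irrel,
      Finset.sum_const_zero, Finset.sum_ite_eq, Finset.sum_ite_eq', Finset.mem_univ,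
      if_true, hdiag]
    rw [hA' k l']
    split_ifs <;> ring
  refine ⟨?_, ?_, ?_⟩
  · -- skew-symmetry of values
    intro A hA
    have hA' := skew_entry A hA
    rw [hφ, Matrix.transpose_smul, ← smul_neg]
    congr 1
    simp only [Matrix.transpose_sum, Matrix.transpose_smul, Matrix.transpose_mul, hsym]
    rw [Finset.sum_comm]
    simp only [← Finset.sum_neg_distrib]
    exact Finset.sum_congr rfl fun x _ => Finset.sum_congr rfl fun y _ => by
      rw [hA' x y, neg_smul]
  · -- injectivity
    intro A B hA hB hAB
    have hl0 : -(l:ℝ) ≠ 0 := by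
      have : (0:ℝ) < l := by exact_mod_cast Nat.lt_of_lt_of_le Nat.zero_lt_one hl
      intro h; rw [neg_eq_zero] at h; linarith
    ext k l'
    have h1 := key2 A hA k l'
    rw [hAB, key2 B hB k l'] at h1
    exact mul_left_cancel₀ hl0 h1.symm
  · -- Lie algebra homomorphism
    intro A B hA hB
    have hB' := skew_entry B hB
    have hR : φ A * φ B - φ B * φ A
        = (1/4 : ℝ) • ∑ i, ∑ j, ((A*B) i j - (B*A) i j) • (P i * P j) := by
      rw [hφ, hφ, smul_mul_assoc, mul_smul_comm, smul_smul, smul_mul_assoc, mul_smul_comm,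
        smul_smul, ← smul_sub, cs_key3 P rel A B, cs_key4 P A B hB', smul_smul]
      norm_num
    rw [hR, hφ]
    congr 1
end

section
/- Let x₁ ≥ x₂ ≥ x₃ ≥ x₄ ≥ 0 and x be real numbers. Then (ε₁x₁ + ε₂x₂ + ε₃x₃ + ε₄x₄)/2 + δ·x ∈ {1, −1} for all choices of signs ε₁, ε₂, ε₃, ε₄, δ ∈ {1, −1} if and only if either (x₁, x₂, x₃, x₄, x) = (2, 0, 0, 0, 0), or x₁ = x₂ = x₃ = x₄ = 0 and x ∈ {1, −1}. -/
set_option maxHeartbeats 2000000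


/-- The computation determining the complex structures preserving the FKM foliation
`F_{(8,7)}` of `S³¹`: for `x₁ ≥ x₂ ≥ x₃ ≥ x₄ ≥ 0` and `x ∈ ℝ`, all the weights
`(±x₁ ± x₂ ± x₃ ± x₄)/2 ± x` lie in `{1, −1}` if and only if
`(x₁,x₂,x₃,x₄,x) = (2,0,0,0,0)` or `x₁ = x₂ = x₃ = x₄ = 0` and `x ∈ {1,−1}`. -/
theorem weights_pm_one_iff_F87 (x₁ x₂ x₃ x₄ x : ℝ)
    (h₁₂ : x₂ ≤ x₁) (h₂₃ : x₃ ≤ x₂) (h₃₄ : x₄ ≤ x₃) (h₄ : 0 ≤ x₄) :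
    (∀ ε₁ ε₂ ε₃ ε₄ δ : ℝ,
        (ε₁ = 1 ∨ ε₁ = -1) → (ε₂ = 1 ∨ ε₂ = -1) → (ε₃ = 1 ∨ ε₃ = -1) →
        (ε₄ = 1 ∨ ε₄ = -1) → (δ = 1 ∨ δ = -1) →
        (ε₁ * x₁ + ε₂ * x₂ + ε₃ * x₃ + ε₄ * x₄) / 2 + δ * x = 1 ∨
        (ε₁ * x₁ + ε₂ * x₂ + ε₃ * x₃ + ε₄ * x₄) / 2 + δ * x = -1)
      ↔ ((x₁ = 2 ∧ x₂ = 0 ∧ x₃ = 0 ∧ x₄ = 0 ∧ x = 0) ∨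
         (x₁ = 0 ∧ x₂ = 0 ∧ x₃ = 0 ∧ x₄ = 0 ∧ (x = 1 ∨ x = -1))) := by
  constructor
  · intro h
    have A := h 1 1 1 1 1 (Or.inl rfl) (Or.inl rfl) (Or.inl rfl) (Or.inl rfl) (Or.inl rfl)
    have B := h 1 1 1 1 (-1) (Or.inl rfl) (Or.inl rfl) (Or.inl rfl) (Or.inl rfl) (Or.inr rfl)
    have C := h 1 1 1 (-1) 1 (Or.inl rfl) (Or.inl rfl) (Or.inl rfl) (Or.inr rfl) (Or.inl rfl)
    have D := h 1 1 (-1) 1 1 (Or.inl rfl) (Or.inl rfl) (Or.inr rfl) (Or.inl rfl) (Or.inl rfl)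
    have E := h 1 (-1) 1 1 1 (Or.inl rfl) (Or.inr rfl) (Or.inl rfl) (Or.inl rfl) (Or.inl rfl)
    rcases A with A|A <;> rcases B with B|B <;> rcases C with C|C <;>
      rcases D with D|D <;> rcases E with E|E <;>
      first
      | exact Or.inl ⟨by linarith, by linarith, by linarith, by linarith, by linarith⟩
      | exact Or.inr ⟨by linarith, by linarith, by linarith, by linarith, Or.inl (by linarith)⟩
      | exact Or.inr ⟨by linarith, by linarith, by linarith, by linarith, Or.inr (by linarith)⟩
  · rintro (⟨e1, e2, e3, e4, e5⟩ | ⟨e1, e2, e3, e4, e5 | e5⟩) <;> subst e1 e2 e3 e4 e5 <;>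
      rintro ε₁ ε₂ ε₃ ε₄ δ (rfl|rfl) (rfl|rfl) (rfl|rfl) (rfl|rfl) (rfl|rfl) <;> norm_num
end

section
/- Let x₁ ≥ x₂ ≥ x₃ ≥ x₄ ≥ 0 be real numbers. Then (ε₁x₁ + ε₂x₂ + ε₃x₃ + ε₄x₄)/2 ∈ {1, −1} for all choices of signs ε₁, ε₂, ε₃, ε₄ ∈ {1, −1} if and only if (x₁, x₂, x₃, x₄) = (2, 0, 0, 0). -/
set_option maxHeartbeats 1000000 in
/-- The computation determining the complex structures preserving the FKM foliation
`F_{\underline{(8,7)}}` of `S³¹`: for `x₁ ≥ x₂ ≥ x₃ ≥ x₄ ≥ 0`, all the weights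
`(±x₁ ± x₂ ± x₃ ± x₄)/2` lie in `{1, −1}` if and only if
`(x₁,x₂,x₃,x₄) = (2,0,0,0)`. -/
theorem weights_pm_one_iff_F87u (x₁ x₂ x₃ x₄ : ℝ)
    (h₁₂ : x₂ ≤ x₁) (h₂₃ : x₃ ≤ x₂) (h₃₄ : x₄ ≤ x₃) (h₄ : 0 ≤ x₄) :
    (∀ ε₁ ε₂ ε₃ ε₄ : ℝ,
        (ε₁ = 1 ∨ ε₁ = -1) → (ε₂ = 1 ∨ ε₂ = -1) → (ε₃ = 1 ∨ ε₃ = -1) →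
        (ε₄ = 1 ∨ ε₄ = -1) →
        (ε₁ * x₁ + ε₂ * x₂ + ε₃ * x₃ + ε₄ * x₄) / 2 = 1 ∨
        (ε₁ * x₁ + ε₂ * x₂ + ε₃ * x₃ + ε₄ * x₄) / 2 = -1)
      ↔ (x₁ = 2 ∧ x₂ = 0 ∧ x₃ = 0 ∧ x₄ = 0) := by
  constructor
  · intro h
    have A := h 1 1 1 1 (Or.inl rfl) (Or.inl rfl) (Or.inl rfl) (Or.inl rfl)
    have B := h 1 1 1 (-1) (Or.inl rfl) (Or.inl rfl) (Or.inl rfl) (Or.inr rfl)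
    have C := h 1 1 (-1) 1 (Or.inl rfl) (Or.inl rfl) (Or.inr rfl) (Or.inl rfl)
    have D := h 1 (-1) 1 1 (Or.inl rfl) (Or.inr rfl) (Or.inl rfl) (Or.inl rfl)
    simp only [one_mul, neg_one_mul] at A B C D
    rcases A with A | A <;> rcases B with B | B <;> rcases C with C | C <;>
      rcases D with D | D <;>
      refine ⟨by linarith, by linarith, by linarith, by linarith⟩
  · rintro ⟨rfl, rfl, rfl, rfl⟩ ε₁ ε₂ ε₃ ε₄ h1 h2 h3 h4
    rcases h1 with rfl | rfl
    · left; ring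
    · right; ring
end
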